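/- The falling factorial moments of the frequency counts satisfy: for nonnegative integers r_1,...,r_k with Σr_i = r ≤ n and Σ i·r_i = κ ≤ k, E[∏_{i=1}^k {A_{n,k}(i)}_{r_i}] = {n}_r {k}_κ (σ_{k-κ}((n-r)θ)/σ_k(nθ)) ∏_{i=1}^k (σ_i(θ)/i!)^{r_i}, where {m}_j denotes the falling factorial. -/

import Mathlib

/-!
Conditioning on `∑ ξ = k` turns the expectation into a finite sum over the tuples `v` with
`∑ v = k`, each weighted by `∏ w (v m)`, where `w j = σ_j(θ) x^j / (Z j!)` is the law of one box.
Peeling off the first coordinate and using `{c+1}_t = {c}_t + t {c}_{t-1}`, the generating series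
`F_{n,r} = ∑_K ∑_{∑ v = K} ∏_i {#(v = i)}_{r_i} ∏ w (v m) X^K` satisfy
`F_{n+1,r} = W F_{n,r} + ∑_j r_j w_j X^j F_{n,r-e_j}` with `W = ∑ w_j X^j`, so by induction on `n`
`F_{n,r} = {n}_{r₀} (∏ w_i^{r_i}) X^κ W^{n-r₀}`. Finally `W = Z⁻¹ exp(θ φ(xX))`, hence
`W^m = Z^{-m} exp(mθ φ(xX))`, whose coefficients are again values of `σ`.
-/

open Finset

/-- The local exponential generating function `φ(x) = Σ_{m≥1} (φ_m/m!) x^m`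
as a formal power series. -/
noncomputable def phiPS (φ : ℕ → ℝ) : PowerSeries ℝ :=
  PowerSeries.mk fun m => if m = 0 then 0 else φ m / m.factorial

/-- `σ_k(θ) := k! [x^k] exp(θ φ(x))`, where the coefficient of the composed
exponential is computed termwise (φ has zero constant term, so only `l ≤ k`
contribute). -/
noncomputable def sigmaP (φ : ℕ → ℝ) (k : ℕ) (θ : ℝ) : ℝ :=
  (k.factorial : ℝ) *
    ∑ l ∈ Finset.range (k + 1),
      θ ^ l / l.factorial * PowerSeries.coeff k (phiPS φ ^ l)

open PowerSeries MeasureTheory ProbabilityTheory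

theorem Nat.succ_descFactorial_eq_add (c t : ℕ) :
    (c + 1).descFactorial t = c.descFactorial t + t * c.descFactorial (t - 1) := by
  cases t with
  | zero => simp
  | succ t =>
    rw [Nat.succ_descFactorial_succ, Nat.descFactorial_succ, Nat.add_sub_cancel, ← add_mul]
    rcases le_or_gt t c with h | h
    · rw [show c - t + (t + 1) = c + 1 by omega]
    · simp [Nat.descFactorial_of_lt h]

theorem Finset.Nat.sum_antidiagonalTuple_succ {M : Type*} [AddCommMonoid M] (k n : ℕ)
    (f : (Fin (k + 1) → ℕ) → M) :
    ∑ v ∈ antidiagonalTuple (k + 1) n, f v =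
      ∑ p ∈ antidiagonal n, ∑ u ∈ antidiagonalTuple k p.2, f (Fin.cons p.1 u) := by
  rw [sum_sigma']
  refine sum_nbij' (fun v => ⟨(v 0, ∑ i, Fin.tail v i), Fin.tail v⟩)
    (fun q => Fin.cons q.1.1 q.2) ?_ ?_ (fun v _ => Fin.cons_self_tail v) ?_ (fun v _ => by simp)
  · intro v hv
    simp_all [mem_antidiagonalTuple, Fin.sum_univ_succ, Fin.tail]
  · rintro ⟨⟨a, b⟩, u⟩ h
    simp_all [mem_antidiagonalTuple, Fin.sum_cons]
  · rintro ⟨⟨a, b⟩, u⟩ h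
    simp_all [mem_antidiagonalTuple]

lemma Fin.card_filter_cons_eq {α : Type*} [DecidableEq α] {n : ℕ} (j : α) (u : Fin n → α)
    (i : α) :
    #{m | (Fin.cons j u : Fin (n + 1) → α) m = i} = #{m | u m = i} + if j = i then 1 else 0 := by
  rw [Fin.card_filter_univ_succ]
  split_ifs <;> simp_all

lemma prod_descFactorial_card_filter_cons {n : ℕ} (I : Finset ℕ) (r : ℕ → ℕ) (j : ℕ)
    (u : Fin n → ℕ) :
    ∏ i ∈ I, (#{m | (Fin.cons j u : Fin (n + 1) → ℕ) m = i}).descFactorial (r i) =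
      ∏ i ∈ I, (#{m | u m = i}).descFactorial (r i) +
        (if j ∈ I then r j else 0) *
          ∏ i ∈ I, (#{m | u m = i}).descFactorial ((r - Pi.single j 1 : ℕ → ℕ) i) := by
  have hfar : ∀ i ≠ j, (#{m | (Fin.cons j u : Fin (n + 1) → ℕ) m = i}).descFactorial (r i) =
      (#{m | u m = i}).descFactorial (r i) := fun i hi => by
    rw [Fin.card_filter_cons_eq, if_neg hi.symm, add_zero]
  split_ifs with hj
  · have hsub :
        ∏ i ∈ I.erase j, (#{m | u m = i}).descFactorial ((r - Pi.single j 1 : ℕ → ℕ) i) =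
          ∏ i ∈ I.erase j, (#{m | u m = i}).descFactorial (r i) :=
      prod_congr rfl fun i hi => by simp [ne_of_mem_erase hi]
    rw [← mul_prod_erase I _ hj, ← mul_prod_erase I _ hj, ← mul_prod_erase I _ hj, hsub,
      prod_congr rfl (fun i hi => hfar i (ne_of_mem_erase hi)),
      Fin.card_filter_cons_eq, if_pos rfl, Nat.succ_descFactorial_eq_add]
    simp only [Pi.sub_apply, Pi.single_eq_same]
    ring
  · rw [zero_mul, add_zero]
    exact prod_congr rfl fun i hi => hfar i (by rintro rfl; exact hj hi)

section

variable {M : Type*} [CommMonoid M] {I : Finset ℕ} {j : ℕ} (hj : j ∈ I) (r : ℕ → ℕ)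
include hj

lemma sum_add_single_of_mem :
    ∑ i ∈ I, (r + Pi.single j 1 : ℕ → ℕ) i = ∑ i ∈ I, r i + 1 := by
  simp [sum_add_distrib, Pi.single_apply, hj]

lemma sum_mul_add_single_of_mem :
    ∑ i ∈ I, i * (r + Pi.single j 1 : ℕ → ℕ) i = ∑ i ∈ I, i * r i + j := by
  simp [mul_add, sum_add_distrib, Pi.single_apply, hj]

lemma prod_pow_add_single_of_mem (w : ℕ → M) :
    ∏ i ∈ I, w i ^ (r + Pi.single j 1 : ℕ → ℕ) i = (∏ i ∈ I, w i ^ r i) * w j := by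
  simp only [Pi.add_apply, pow_add, prod_mul_distrib, Pi.single_apply, pow_ite, pow_one,
    pow_zero, prod_ite_eq', if_pos hj]

end

section FactorialMoment

variable {R : Type*} [CommSemiring R] (w : ℕ → R) (I : Finset ℕ)

noncomputable def factorialMomentSeries (r : ℕ → ℕ) (n : ℕ) : PowerSeries R :=
  mk fun K => ∑ v ∈ Nat.antidiagonalTuple n K,
    (∏ i ∈ I, ((#{m | v m = i}).descFactorial (r i) : R)) * ∏ m, w (v m)

lemma factorialMomentSeries_succ (r : ℕ → ℕ) (n : ℕ) :
    factorialMomentSeries w I r (n + 1) =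
      mk w * factorialMomentSeries w I r n +
        ∑ j ∈ I, monomial j (r j * w j) * factorialMomentSeries w I (r - Pi.single j 1) n := by
  ext K
  simp only [factorialMomentSeries, coeff_mk, map_add, map_sum, coeff_mul, coeff_monomial,
    Nat.sum_antidiagonalTuple_succ, Fin.prod_univ_succ, Fin.cons_zero, Fin.cons_succ]
  rw [sum_comm (s := I) (t := antidiagonal K), ← sum_add_distrib]
  refine sum_congr rfl fun p _ => ?_
  simp only [ite_mul, zero_mul, sum_ite_eq]
  split_ifs with hj <;>
  · simp only [mul_sum, ← sum_add_distrib, add_zero]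
    refine sum_congr rfl fun u _ => ?_
    rw [← Nat.cast_prod, prod_descFactorial_card_filter_cons]
    simp only [hj, if_true, if_false]
    push_cast
    ring

lemma factorialMomentSeries_zero (r : ℕ → ℕ) :
    factorialMomentSeries w I r 0 =
      monomial (∑ i ∈ I, i * r i)
        (((0 : ℕ).descFactorial (∑ i ∈ I, r i) : R) * ∏ i ∈ I, w i ^ r i) := by
  by_cases hr : ∀ i ∈ I, r i = 0
  · have hprod : ∏ i ∈ I, (((0 : ℕ).descFactorial (r i) : ℕ) : R) = 1 :=
      prod_eq_one fun i hi => by rw [hr i hi, Nat.descFactorial_zero, Nat.cast_one]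
    rw [sum_eq_zero hr, sum_eq_zero fun i hi => by rw [hr i hi, mul_zero],
      prod_eq_one fun i hi => by rw [hr i hi, pow_zero]]
    ext K
    cases K <;> simp [factorialMomentSeries, hprod]
  · push Not at hr
    obtain ⟨i, hi, hri⟩ := hr
    have hlt : 0 < ∑ i ∈ I, r i :=
      lt_of_lt_of_le (Nat.pos_of_ne_zero hri) (single_le_sum (by simp) hi)
    have hprod : ∏ i ∈ I, (((0 : ℕ).descFactorial (r i) : ℕ) : R) = 0 :=
      prod_eq_zero hi (by simp [Nat.descFactorial_of_lt (Nat.pos_of_ne_zero hri)])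
    ext K
    simp [factorialMomentSeries, Nat.descFactorial_of_lt hlt, hprod]

theorem factorialMomentSeries_eq (r : ℕ → ℕ) (n : ℕ) :
    factorialMomentSeries w I r n =
      monomial (∑ i ∈ I, i * r i) ((n.descFactorial (∑ i ∈ I, r i) : R) * ∏ i ∈ I, w i ^ r i) *
        mk w ^ (n - ∑ i ∈ I, r i) := by
  induction n generalizing r with
  | zero => rw [factorialMomentSeries_zero, zero_tsub, pow_zero, mul_one]
  | succ n ih =>
    set r₀ := ∑ i ∈ I, r i
    set κ := ∑ i ∈ I, i * r i
    set P := ∏ i ∈ I, w i ^ r i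
    have hterm : ∀ j ∈ I,
        monomial j (r j * w j) * factorialMomentSeries w I (r - Pi.single j 1) n =
          monomial κ (r j * (n.descFactorial (r₀ - 1) * P)) * mk w ^ (n + 1 - r₀) := by
      intro j hj
      rcases eq_or_ne (r j) 0 with h0 | h0
      · simp [h0]
      obtain ⟨r', rfl⟩ : ∃ r', r = r' + Pi.single j 1 :=
        ⟨r - Pi.single j 1, funext fun i => by
          rcases eq_or_ne i j with rfl | h <;> simp [*]; omega⟩
      simp only [r₀, κ, P, ih, add_tsub_cancel_right, sum_add_single_of_mem hj,
        sum_mul_add_single_of_mem hj, prod_pow_add_single_of_mem hj, monomial_mul_monomial,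
        ← mul_assoc]
      rw [Nat.add_sub_add_right, add_comm j]
      congr 2
      ring
    rw [factorialMomentSeries_succ, ih, sum_congr rfl hterm, ← sum_mul, ← map_sum, ← sum_mul,
      ← Nat.cast_sum, mul_left_comm, ← pow_succ']
    have hexp : monomial κ ((n.descFactorial r₀ : R) * P) * mk w ^ (n - r₀ + 1) =
        monomial κ ((n.descFactorial r₀ : R) * P) * mk w ^ (n + 1 - r₀) := by
      rcases le_or_gt r₀ n with h | h
      · rw [Nat.sub_add_comm h]
      · simp [Nat.descFactorial_of_lt h]
    rw [hexp, ← add_mul, ← map_add, Nat.succ_descFactorial_eq_add, Nat.cast_add,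
      Nat.cast_mul]
    congr 2
    ring

theorem sum_antidiagonalTuple_prod_descFactorial_mul_prod (r : ℕ → ℕ) (n K : ℕ)
    (hK : ∑ i ∈ I, i * r i ≤ K) :
    ∑ v ∈ Nat.antidiagonalTuple n K,
        (∏ i ∈ I, ((#{m | v m = i}).descFactorial (r i) : R)) * ∏ m, w (v m) =
      (n.descFactorial (∑ i ∈ I, r i) : R) * (∏ i ∈ I, w i ^ r i) *
        coeff (K - ∑ i ∈ I, i * r i) (mk w ^ (n - ∑ i ∈ I, r i)) := by
  simpa only [factorialMomentSeries, coeff_mk, monomial_eq_C_mul_X_pow, mul_assoc, coeff_C_mul,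
    coeff_X_pow_mul', if_pos hK] using
    congrArg (coeff K) (factorialMomentSeries_eq w I r n)

lemma coeff_mk_pow_eq_sum_antidiagonalTuple (n K : ℕ) :
    coeff K (mk w ^ n) = ∑ v ∈ Nat.antidiagonalTuple n K, ∏ m, w (v m) := by
  simpa using (sum_antidiagonalTuple_prod_descFactorial_mul_prod w ∅ 0 n K (by simp)).symm

end FactorialMoment

lemma prod_mul_pow_div_pow {K : Type*} [Field K] (I : Finset ℕ) (r : ℕ → ℕ) (c : ℕ → K)
    (x Z : K) :
    ∏ i ∈ I, (c i * x ^ i / Z) ^ r i =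
      (∏ i ∈ I, c i ^ r i) * x ^ (∑ i ∈ I, i * r i) / Z ^ (∑ i ∈ I, r i) := by
  simp [div_pow, mul_pow, prod_div_distrib, prod_mul_distrib, ← pow_mul, prod_pow_eq_pow_sum]

lemma PowerSeries.coeff_pow_nonneg {R : Type*} [CommSemiring R] [PartialOrder R]
    [IsOrderedRing R] {f : PowerSeries R} (hf : ∀ n, 0 ≤ coeff n f) (l n : ℕ) :
    0 ≤ coeff n (f ^ l) := by
  induction l generalizing n with
  | zero => rw [pow_zero, coeff_one]; split_ifs <;> simp
  | succ l ih =>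
    rw [pow_succ, coeff_mul]
    exact sum_nonneg fun p _ => mul_nonneg (ih p.1) (hf p.2)

lemma constantCoeff_phiPS (φ : ℕ → ℝ) : constantCoeff (phiPS φ) = 0 := by
  simp [phiPS]

lemma coeff_phiPS_pow_of_lt (φ : ℕ → ℝ) {k l : ℕ} (h : k < l) :
    coeff k (phiPS φ ^ l) = 0 := by
  refine coeff_of_lt_order _ (lt_of_lt_of_le ?_
    (le_order_pow_of_constantCoeff_eq_zero l (constantCoeff_phiPS φ)))
  exact_mod_cast h

lemma sigmaP_nonneg (φ : ℕ → ℝ) (hφ : ∀ m, 0 ≤ φ m) (k : ℕ) {θ : ℝ} (hθ : 0 ≤ θ) :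
    0 ≤ sigmaP φ k θ := by
  have hcoeff : ∀ m, 0 ≤ coeff m (phiPS φ) := fun m => by
    rw [phiPS, coeff_mk]
    split_ifs
    exacts [le_rfl, div_nonneg (hφ m) (Nat.cast_nonneg _)]
  exact mul_nonneg (Nat.cast_nonneg _) <| sum_nonneg fun l _ =>
    mul_nonneg (by positivity) (coeff_pow_nonneg hcoeff l k)

noncomputable def expPhi (φ : ℕ → ℝ) (θ : ℝ) : PowerSeries ℝ :=
  (rescale θ (exp ℝ)).subst (phiPS φ)

lemma sigmaP_eq_factorial_mul_coeff_expPhi (φ : ℕ → ℝ) (k : ℕ) (θ : ℝ) :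
    sigmaP φ k θ = k.factorial * coeff k (expPhi φ θ) := by
  rw [sigmaP, expPhi, coeff_subst' (HasSubst.of_constantCoeff_zero' (constantCoeff_phiPS φ)),
    finsum_eq_sum_of_support_subset (s := range (k + 1))]
  · simp [coeff_exp, div_eq_mul_inv, mul_comm]
  · intro l hl
    simp only [Function.mem_support, coe_range, Set.mem_Iio] at hl ⊢
    by_contra! h
    exact hl (by rw [coeff_phiPS_pow_of_lt φ (by omega), smul_zero])

lemma expPhi_pow (φ : ℕ → ℝ) (θ : ℝ) (n : ℕ) : expPhi φ θ ^ n = expPhi φ (n * θ) := by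
  rw [expPhi, expPhi, ← subst_pow (HasSubst.of_constantCoeff_zero' (constantCoeff_phiPS φ)),
    ← map_pow, exp_pow_eq_rescale_exp, rescale_rescale, mul_comm]

lemma coeff_mk_sigmaP_pow (φ : ℕ → ℝ) (θ x Z : ℝ) (hZ : Z ≠ 0) (m t : ℕ) :
    coeff t ((mk fun j => sigmaP φ j θ * x ^ j / (Z * j.factorial)) ^ m) =
      sigmaP φ t (m * θ) * x ^ t / (Z ^ m * t.factorial) := by
  have hseries : (mk fun j => sigmaP φ j θ * x ^ j / (Z * j.factorial)) =
      C Z⁻¹ * rescale x (expPhi φ θ) := by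
    ext j
    rw [coeff_mk, coeff_C_mul, coeff_rescale, sigmaP_eq_factorial_mul_coeff_expPhi]
    field_simp
  rw [hseries, mul_pow, ← map_pow, ← map_pow, expPhi_pow, coeff_C_mul, coeff_rescale,
    sigmaP_eq_factorial_mul_coeff_expPhi, inv_pow]
  field_simp

section

variable {Ω : Type*} [MeasurableSpace Ω] {P : Measure Ω} {n : ℕ} {ξ : Fin n → Ω → ℕ}

lemma setIntegral_sum_eq_of_iIndepFun [IsFiniteMeasure P] (hmeas : ∀ i, Measurable (ξ i))
    (hindep : iIndepFun ξ P) {w : ℕ → ℝ} (hw : ∀ j, 0 ≤ w j)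
    (hlaw : ∀ i j, P {ω | ξ i ω = j} = ENNReal.ofReal (w j)) (g : (Fin n → ℕ) → ℝ) (K : ℕ) :
    ∫ ω in {ω | ∑ i, ξ i ω = K}, g (fun i => ξ i ω) ∂P =
      ∑ v ∈ Nat.antidiagonalTuple n K, g v * ∏ m, w (v m) := by
  have hE : ∀ v : Fin n → ℕ, MeasurableSet {ω | ∀ i, ξ i ω = v i} := fun v => by
    simp only [Set.ofPred_forall]
    exact MeasurableSet.iInter fun i => hmeas i (measurableSet_singleton (v i))
  have hunion :
      {ω | ∑ i, ξ i ω = K} = ⋃ v ∈ Nat.antidiagonalTuple n K, {ω | ∀ i, ξ i ω = v i} := by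
    ext ω
    simp only [Set.mem_ofPred_eq, Set.mem_iUnion, Nat.mem_antidiagonalTuple, exists_prop]
    exact ⟨fun h => ⟨_, h, fun _ => rfl⟩, fun ⟨v, hv, h⟩ => by simp_rw [h, hv]⟩
  have hconst : ∀ v, ∀ ω ∈ {ω | ∀ i, ξ i ω = v i}, g (fun i => ξ i ω) = g v :=
    fun v ω hω => congrArg g (funext hω)
  rw [hunion, integral_biUnion_finset _ (fun v _ => hE v)]
  · refine sum_congr rfl fun v _ => ?_
    have hprob : P {ω | ∀ i, ξ i ω = v i} = ∏ m, ENNReal.ofReal (w (v m)) := by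
      simpa [Set.preimage, Set.ofPred_forall, hlaw] using
        iIndepFun_iff_measure_inter_preimage_eq_mul.mp hindep univ
          (sets := fun i => {v i}) (fun _ _ => measurableSet_singleton _)
    rw [setIntegral_congr_fun (hE v) (hconst v), setIntegral_const, smul_eq_mul, mul_comm,
      measureReal_def, hprob, ENNReal.toReal_prod]
    simp [hw]
  · intro v _ v' _ hne
    exact Set.disjoint_left.mpr fun ω h h' => hne (funext fun i => (h i).symm.trans (h' i))
  · intro v _
    exact (integrableOn_const (C := g v) (measure_ne_top _ _)).congr_fun
      (fun ω hω => (hconst v ω hω).symm) (hE v)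

lemma integral_cond_eq_inv_mul_setIntegral (f : Ω → ℝ) (S : Set Ω) :
    ∫ ω, f ω ∂(P[|S]) = (P.real S)⁻¹ * ∫ ω in S, f ω ∂P := by
  rw [ProbabilityTheory.cond, integral_smul_measure, ENNReal.toReal_inv, smul_eq_mul,
    measureReal_def]

end

theorem stmt13_general {Ω : Type*} [MeasurableSpace Ω] (P : Measure Ω) [IsProbabilityMeasure P]
    (φ : ℕ → ℝ) (hφ : ∀ m, 0 ≤ φ m)
    (θ x Zθ : ℝ) (hθ : 0 < θ) (hx : 0 < x) (hZ : 0 < Zθ)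
    (n : ℕ) (ξ : Fin n → Ω → ℕ)
    (hmeas : ∀ i, Measurable (ξ i))
    (hindep : iIndepFun ξ P)
    (hlaw : ∀ i j, P {ω | ξ i ω = j} =
      ENNReal.ofReal (sigmaP φ j θ * x ^ j / (Zθ * j.factorial)))
    (k : ℕ) (r : ℕ → ℕ) (r0 κ : ℕ)
    (hr : ∑ i ∈ Finset.Icc 1 k, r i = r0) (hr0 : r0 ≤ n)
    (hκ : ∑ i ∈ Finset.Icc 1 k, i * r i = κ) (hκk : κ ≤ k) :
    ∫ ω, ∏ i ∈ Finset.Icc 1 k,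
        (((Finset.univ.filter fun m => ξ m ω = i).card.descFactorial (r i) : ℕ) : ℝ)
        ∂(ProbabilityTheory.cond P {ω | ∑ i, ξ i ω = k}) =
      (n.descFactorial r0 : ℝ) * (k.descFactorial κ : ℝ) *
        (sigmaP φ (k - κ) (((n : ℝ) - r0) * θ) / sigmaP φ k (n * θ)) *
        ∏ i ∈ Finset.Icc 1 k, (sigmaP φ i θ / i.factorial) ^ r i := by
  set w : ℕ → ℝ := fun j => sigmaP φ j θ * x ^ j / (Zθ * j.factorial)
  have hw : ∀ j, 0 ≤ w j := fun j => by
    have := sigmaP_nonneg φ hφ j hθ.le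
    positivity
  have hS : P.real {ω | ∑ i, ξ i ω = k} = coeff k (mk w ^ n) := by
    simpa [coeff_mk_pow_eq_sum_antidiagonalTuple] using
      setIntegral_sum_eq_of_iIndepFun hmeas hindep hw hlaw (fun _ => (1 : ℝ)) k
  have hmoment : ∫ ω in {ω | ∑ i, ξ i ω = k}, ∏ i ∈ Icc 1 k,
        (((#{m | ξ m ω = i}).descFactorial (r i) : ℕ) : ℝ) ∂P =
      n.descFactorial r0 * (∏ i ∈ Icc 1 k, w i ^ r i) * coeff (k - κ) (mk w ^ (n - r0)) := by
    rw [setIntegral_sum_eq_of_iIndepFun hmeas hindep hw hlaw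
      (fun v => ∏ i ∈ Icc 1 k, (((#{m | v m = i}).descFactorial (r i) : ℕ) : ℝ)), ← hr, ← hκ]
    exact sum_antidiagonalTuple_prod_descFactorial_mul_prod w _ r n k (hκ ▸ hκk)
  have hweights : ∏ i ∈ Icc 1 k, w i ^ r i =
      (∏ i ∈ Icc 1 k, (sigmaP φ i θ / i.factorial) ^ r i) * x ^ κ / Zθ ^ r0 := by
    rw [← hr, ← hκ, ← prod_mul_pow_div_pow]
    exact prod_congr rfl fun i _ => by simp only [w]; ring
  rw [integral_cond_eq_inv_mul_setIntegral, hmoment, hS, coeff_mk_sigmaP_pow _ _ _ _ hZ.ne',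
    coeff_mk_sigmaP_pow _ _ _ _ hZ.ne', hweights, Nat.cast_sub hr0,
    ← Nat.factorial_mul_descFactorial hκk, ← pow_sub_mul_pow x hκk, ← pow_sub_mul_pow Zθ hr0]
  push_cast
  field_simp

theorem stmt13 {Ω : Type*} [MeasurableSpace Ω] (P : Measure Ω) [IsProbabilityMeasure P]
    (φ : ℕ → ℝ) (hφ1 : 0 < φ 1) (hφ : ∀ m, 0 ≤ φ m)
    (θ x Zθ : ℝ) (hθ : 0 < θ) (hx : 0 < x) (hZ : 0 < Zθ)
    (n : ℕ) (ξ : Fin n → Ω → ℕ)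
    (hmeas : ∀ i, Measurable (ξ i))
    (hindep : iIndepFun ξ P)
    (hlaw : ∀ i j, P {ω | ξ i ω = j} =
      ENNReal.ofReal (sigmaP φ j θ * x ^ j / (Zθ * j.factorial)))
    (k : ℕ) (r : ℕ → ℕ) (r0 κ : ℕ)
    (hr : ∑ i ∈ Finset.Icc 1 k, r i = r0) (hr0 : r0 ≤ n)
    (hκ : ∑ i ∈ Finset.Icc 1 k, i * r i = κ) (hκk : κ ≤ k) :
    ∫ ω, ∏ i ∈ Finset.Icc 1 k,
        (((Finset.univ.filter fun m => ξ m ω = i).card.descFactorial (r i) : ℕ) : ℝ)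
        ∂(ProbabilityTheory.cond P {ω | ∑ i, ξ i ω = k}) =
      (n.descFactorial r0 : ℝ) * (k.descFactorial κ : ℝ) *
        (sigmaP φ (k - κ) (((n : ℝ) - r0) * θ) / sigmaP φ k (n * θ)) *
        ∏ i ∈ Finset.Icc 1 k, (sigmaP φ i θ / i.factorial) ^ r i :=
  stmt13_general P φ hφ θ x Zθ hθ hx hZ n ξ hmeas hindep hlaw k r r0 κ hr hr0 hκ hκk
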